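/- Define g : (9,∞) → ℝ by g(x) = 2/(3x) − 1/(12(x−1)) + 5/(12(x+1)) − ln(1 + 1/x) − (1/(12(x+1)³) + 13/(120(x+1)⁴)) + (1/(12x³) + 13/(120x⁴)). Then g is strictly decreasing on (9,∞). -/

import Mathlib

/-!
Differentiating term by term, `g' x = -Q x / (60 x⁵ (x - 1)² (x + 1)⁵)`. Expanded in powers of
`x - 9`, the polynomial `Q` has only positive coefficients, so `g' < 0` on `(9, ∞)`.
-/

noncomputable def g (x : ℝ) : ℝ :=
  2 / (3 * x) - 1 / (12 * (x - 1)) + 5 / (12 * (x + 1)) - Real.log (1 + 1 / x)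
    - (1 / (12 * (x + 1) ^ 3) + 13 / (120 * (x + 1) ^ 4))
    + (1 / (12 * x ^ 3) + 13 / (120 * x ^ 4))

open Real Set

lemma hasDerivAt_const_div_mul_add_pow (c a b : ℝ) (n : ℕ) {x : ℝ} (hx : x + b ≠ 0) :
    HasDerivAt (fun y => c / (a * (y + b) ^ n)) (-(n * c) / (a * (x + b) ^ (n + 1))) x := by
  rcases eq_or_ne a 0 with rfl | ha
  · simpa using hasDerivAt_const x (0 : ℝ)
  have hden : HasDerivAt (fun y => a * (y + b) ^ n) (a * (n * (x + b) ^ (n - 1))) x := by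
    simpa using (((hasDerivAt_id x).add_const b).pow n).const_mul a
  refine ((hasDerivAt_const x c).div hden (by positivity)).congr_deriv ?_
  rcases n with _ | n
  · simp
  · simp only [Nat.add_sub_cancel]
    field_simp
    push_cast
    ring

lemma hasDerivAt_log_one_add_inv {x : ℝ} (hx₀ : x ≠ 0) (hx₁ : x + 1 ≠ 0) :
    HasDerivAt (fun y => log (1 + 1 / y)) (-1 / (x * (x + 1))) x := by
  have hsum : 1 + 1 / x ≠ 0 := by
    rw [one_add_div hx₀]
    exact div_ne_zero hx₁ hx₀
  have hin : HasDerivAt (fun y : ℝ => 1 + 1 / y) (-(x ^ 2)⁻¹) x := by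
    simpa [one_div] using (hasDerivAt_inv hx₀).const_add 1
  refine (hin.log hsum).congr_deriv ?_
  field_simp

noncomputable def Q (x : ℝ) : ℝ :=
  772064 + 1725456 * (x - 9) + 802376 * (x - 9) ^ 2 + 164805 * (x - 9) ^ 3 + 17405 * (x - 9) ^ 4
    + 930 * (x - 9) ^ 5 + 20 * (x - 9) ^ 6

lemma Q_pos {x : ℝ} (hx : 9 ≤ x) : 0 < Q x := by
  have ht : 0 ≤ x - 9 := by linarith
  unfold Q
  linarith [pow_nonneg ht 2, pow_nonneg ht 3, pow_nonneg ht 4, pow_nonneg ht 5, pow_nonneg ht 6]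

lemma hasDerivAt_g {x : ℝ} (hx₀ : x ≠ 0) (hx₁ : x ≠ 1) (hx₂ : x ≠ -1) :
    HasDerivAt g (-Q x / (60 * x ^ 5 * (x - 1) ^ 2 * (x + 1) ^ 5)) x := by
  have hx₀' : x + 0 ≠ 0 := by simpa
  have hx₁' : x + -1 ≠ 0 := by rwa [← sub_eq_add_neg, sub_ne_zero]
  have hx₂ : x + 1 ≠ 0 := by rwa [← sub_neg_eq_add, sub_ne_zero]
  have H := ((((hasDerivAt_const_div_mul_add_pow 2 3 0 1 hx₀').sub
    (hasDerivAt_const_div_mul_add_pow 1 12 (-1) 1 hx₁')).add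
    (hasDerivAt_const_div_mul_add_pow 5 12 1 1 hx₂)).sub (hasDerivAt_log_one_add_inv hx₀ hx₂)).sub
    ((hasDerivAt_const_div_mul_add_pow 1 12 1 3 hx₂).add
      (hasDerivAt_const_div_mul_add_pow 13 120 1 4 hx₂)) |>.add
    ((hasDerivAt_const_div_mul_add_pow 1 12 0 3 hx₀').add
      (hasDerivAt_const_div_mul_add_pow 13 120 0 4 hx₀'))
  have hg : g = fun y => 2 / (3 * (y + 0) ^ 1) - 1 / (12 * (y + -1) ^ 1) + 5 / (12 * (y + 1) ^ 1)
      - log (1 + 1 / y) - (1 / (12 * (y + 1) ^ 3) + 13 / (120 * (y + 1) ^ 4))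
      + (1 / (12 * (y + 0) ^ 3) + 13 / (120 * (y + 0) ^ 4)) := by
    funext y
    simp only [g, add_zero, pow_one, ← sub_eq_add_neg]
  rw [hg]
  refine H.congr_deriv ?_
  simp only [add_zero, ← sub_eq_add_neg]
  unfold Q
  field_simp
  ring

theorem g_strictAntiOn : StrictAntiOn g (Set.Ioi (9 : ℝ)) := by
  have hderiv : ∀ x ∈ Ioi (9 : ℝ), HasDerivAt g (-Q x / (60 * x ^ 5 * (x - 1) ^ 2 * (x + 1) ^ 5)) x :=
    fun x (hx : 9 < x) => hasDerivAt_g (by linarith) (by linarith) (by linarith)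
  refine strictAntiOn_of_deriv_neg (convex_Ioi 9) (HasDerivAt.continuousOn hderiv) fun x hx => ?_
  rw [interior_Ioi, mem_Ioi] at hx
  rw [(hderiv x hx).deriv, neg_div, neg_lt_zero]
  have hQ := Q_pos hx.le
  have hx₁ : x - 1 ≠ 0 := by linarith
  positivity
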